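/- arXiv:2502.13630 — 3 statements merged into one kernel-verified Lean document; each statement's English description precedes it below -/
import Mathlib

section
/- Suppose ‖A‖ ≤ 1 (operator norm), ‖b‖ = 1, η ≥ 0, and T : ℕ with ‖x₀‖ + 3·η·T ≤ 1. Then for every t ≤ T, the inner product of the iterate with b satisfies ⟪b, x t⟫ ≥ ⟪b, x₀⟫ − 3·η·t. -/
open scoped RealInnerProductSpace

/-!
While `‖x‖ ≤ 1`, the gradient `x + A†(A x - b)` has norm at most `‖x‖ + ‖A‖ (‖A‖ ‖x‖ + ‖b‖) ≤ 3`,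
so a step moves the iterate by at most `3η`. Inductively the iterates up to time `T` stay within
`3ηt ≤ 1 - ‖x₀‖` of `x₀`, hence in the unit ball, and the overlap with the unit vector `b` changes
by at most the distance travelled.
-/

theorem norm_sub_le_mul_of_norm_step_le {E : Type*} [SeminormedAddCommGroup E] {x : ℕ → E}
    {c R : ℝ} {T : ℕ} (hc : 0 ≤ c) (hstep : ∀ t, ‖x t‖ ≤ R → ‖x (t + 1) - x t‖ ≤ c)
    (hT : ‖x 0‖ + c * T ≤ R) : ∀ t ≤ T, ‖x t - x 0‖ ≤ c * t := by
  intro t ht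
  induction t with
  | zero => simp
  | succ t ih =>
    have hdrift := ih (by omega)
    have hinside : ‖x t‖ ≤ R := calc
      ‖x t‖ ≤ ‖x 0‖ + ‖x t - x 0‖ := norm_le_norm_add_norm_sub' _ _
      _ ≤ ‖x 0‖ + c * T := by gcongr; exact hdrift.trans (by gcongr; omega)
      _ ≤ R := hT
    calc ‖x (t + 1) - x 0‖ ≤ ‖x (t + 1) - x t‖ + ‖x t - x 0‖ := norm_sub_le_norm_sub_add_norm_sub _ _ _
      _ ≤ c + c * t := add_le_add (hstep t hinside) hdrift
      _ = c * ↑(t + 1) := by push_cast; ring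

theorem norm_add_adjoint_apply_sub_le_three {E : Type*} [NormedAddCommGroup E]
    [InnerProductSpace ℝ E] [CompleteSpace E] {A : E →L[ℝ] E} (hA : ‖A‖ ≤ 1) {b x : E}
    (hb : ‖b‖ ≤ 1) (hx : ‖x‖ ≤ 1) : ‖x + ContinuousLinearMap.adjoint A (A x - b)‖ ≤ 3 := by
  have hAx : ‖A x‖ ≤ 1 := (A.le_opNorm x).trans (by nlinarith [norm_nonneg A, norm_nonneg x])
  calc ‖x + ContinuousLinearMap.adjoint A (A x - b)‖
      ≤ ‖x‖ + ‖ContinuousLinearMap.adjoint A‖ * ‖A x - b‖ :=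
        (norm_add_le _ _).trans (by gcongr; exact ContinuousLinearMap.le_opNorm _ _)
    _ ≤ 1 + 1 * (1 + 1) := by
        rw [LinearIsometryEquiv.norm_map]
        gcongr
        exact (norm_sub_le _ _).trans (add_le_add hAx hb)
    _ = 3 := by norm_num

theorem gradient_descent_overlap_lower_bound_general (n : ℕ)
    (A : EuclideanSpace ℝ (Fin n) →L[ℝ] EuclideanSpace ℝ (Fin n))
    (b : EuclideanSpace ℝ (Fin n)) (hb : ‖b‖ = 1)
    (hA : ‖A‖ ≤ 1)
    (η : ℝ) (hη : 0 ≤ η) (x₀ : EuclideanSpace ℝ (Fin n))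
    (x : ℕ → EuclideanSpace ℝ (Fin n))
    (hx0 : x 0 = x₀)
    (hx : ∀ t, x (t + 1) = x t - η • (x t + (ContinuousLinearMap.adjoint A) (A (x t) - b)))
    (T : ℕ) (hT : ‖x₀‖ + 3 * η * T ≤ 1)
    (t : ℕ) (ht : t ≤ T) :
    ⟪b, x t⟫ ≥ ⟪b, x₀⟫ - 3 * η * t := by
  have hstep : ∀ s, ‖x s‖ ≤ 1 → ‖x (s + 1) - x s‖ ≤ 3 * η := fun s hs => by
    rw [hx s, sub_sub_cancel_left, norm_neg, norm_smul, Real.norm_of_nonneg hη, mul_comm 3]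
    exact mul_le_mul_of_nonneg_left (norm_add_adjoint_apply_sub_le_three hA hb.le hs) hη
  have hdrift : ‖x t - x₀‖ ≤ 3 * η * t := by
    rw [← hx0] at hT ⊢
    exact norm_sub_le_mul_of_norm_step_le (by positivity) hstep hT t ht
  have hoverlap : -(3 * η * t) ≤ ⟪b, x t - x₀⟫ := by
    refine neg_le_of_abs_le ((abs_real_inner_le_norm b _).trans ?_)
    rwa [hb, one_mul]
  rw [inner_sub_right] at hoverlap
  linarith

theorem gradient_descent_overlap_lower_bound (n : ℕ)
    (A : EuclideanSpace ℝ (Fin n) →L[ℝ] EuclideanSpace ℝ (Fin n))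
    (b : EuclideanSpace ℝ (Fin n)) (hb : ‖b‖ = 1)
    (f : EuclideanSpace ℝ (Fin n) → ℝ)
    (hf : ∀ x, f x = (1/2) * ‖x‖^2 + (1/2) * ‖A x - b‖^2)
    (hA : ‖A‖ ≤ 1)
    (η : ℝ) (hη : 0 ≤ η) (x₀ : EuclideanSpace ℝ (Fin n))
    (x : ℕ → EuclideanSpace ℝ (Fin n))
    (hx0 : x 0 = x₀)
    (hx : ∀ t, x (t + 1) = x t - η • (x t + (ContinuousLinearMap.adjoint A) (A (x t) - b)))
    (T : ℕ) (hT : ‖x₀‖ + 3 * η * T ≤ 1)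
    (t : ℕ) (ht : t ≤ T) :
    ⟪b, x t⟫ ≥ ⟪b, x₀⟫ - 3 * η * t :=
  gradient_descent_overlap_lower_bound_general n A b hb hA η hη x₀ x hx0 hx T hT t ht
end

section
/- Suppose ‖A‖ ≤ 1 (operator norm), ‖b‖ = 1, η ≥ 0, and T : ℕ with ‖x₀‖ + 3·η·T ≤ 1. Then for every t ≤ T, the norm of the iterate satisfies ‖x t‖ ≥ ‖x₀‖ − 3·η·t. -/
/-!
For `‖A‖ ≤ 1` and `‖b‖ = 1` the gradient `x + A†(A x - b)` has norm at most `2‖x‖ + 1 ≤ 3` on the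
unit ball, so each step moves the iterate by at most `3η`. Inductively the iterates stay in the
unit ball up to time `T`, whence `‖x t - x₀‖ ≤ 3ηt` and the reverse triangle inequality concludes.
-/

open ContinuousLinearMap

theorem norm_sub_zero_le_of_norm_step_le {E : Type*} [SeminormedAddCommGroup E] {x : ℕ → E}
    {c R : ℝ} {T : ℕ} (hc : 0 ≤ c) (hstep : ∀ k, ‖x k‖ ≤ R → ‖x (k + 1) - x k‖ ≤ c)
    (hT : ‖x 0‖ + c * T ≤ R) : ∀ t ≤ T, ‖x t - x 0‖ ≤ c * t := by
  intro t
  induction t with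
  | zero => simp
  | succ k ih =>
    intro hk
    have hdist : ‖x k - x 0‖ ≤ c * k := ih (Nat.le_of_succ_le hk)
    have hball : ‖x k‖ ≤ R := by
      have : c * k ≤ c * T := by gcongr; exact_mod_cast Nat.le_of_succ_le hk
      linarith [norm_le_norm_add_norm_sub' (x k) (x 0)]
    calc ‖x (k + 1) - x 0‖ ≤ ‖x (k + 1) - x k‖ + ‖x k - x 0‖ := norm_sub_le_norm_sub_add_norm_sub _ _ _
      _ ≤ c + c * k := add_le_add (hstep k hball) hdist
      _ = c * ↑(k + 1) := by push_cast; ring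

theorem norm_add_adjoint_apply_sub_le {𝕜 E : Type*} [RCLike 𝕜] [NormedAddCommGroup E]
    [InnerProductSpace 𝕜 E] [CompleteSpace E] {A : E →L[𝕜] E} (hA : ‖A‖ ≤ 1) (x b : E) :
    ‖x + adjoint A (A x - b)‖ ≤ 2 * ‖x‖ + ‖b‖ := by
  have hA' : ‖adjoint A‖ ≤ 1 := by rwa [LinearIsometryEquiv.norm_map]
  calc ‖x + adjoint A (A x - b)‖ ≤ ‖x‖ + ‖A x - b‖ :=
        norm_add_le_of_le le_rfl (A.adjoint.le_of_opNorm_le hA' _ |>.trans_eq (one_mul _))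
    _ ≤ ‖x‖ + (‖x‖ + ‖b‖) := by
        gcongr
        exact norm_sub_le_of_le (A.le_of_opNorm_le hA x |>.trans_eq (one_mul _)) le_rfl
    _ = 2 * ‖x‖ + ‖b‖ := by ring

theorem gradient_descent_norm_lower_bound_general (n : ℕ)
    (A : EuclideanSpace ℝ (Fin n) →L[ℝ] EuclideanSpace ℝ (Fin n))
    (b : EuclideanSpace ℝ (Fin n)) (hb : ‖b‖ = 1)
    (hA : ‖A‖ ≤ 1)
    (η : ℝ) (hη : 0 ≤ η) (x₀ : EuclideanSpace ℝ (Fin n))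
    (x : ℕ → EuclideanSpace ℝ (Fin n))
    (hx0 : x 0 = x₀)
    (hx : ∀ t, x (t + 1) = x t - η • (x t + (ContinuousLinearMap.adjoint A) (A (x t) - b)))
    (T : ℕ) (hT : ‖x₀‖ + 3 * η * T ≤ 1)
    (t : ℕ) (ht : t ≤ T) :
    ‖x t‖ ≥ ‖x₀‖ - 3 * η * t := by
  subst hx0
  have hstep : ∀ k, ‖x k‖ ≤ 1 → ‖x (k + 1) - x k‖ ≤ 3 * η := by
    intro k hk
    have hgrad := norm_add_adjoint_apply_sub_le hA (x k) b
    rw [hx k, sub_sub_cancel_left, norm_neg, norm_smul, Real.norm_of_nonneg hη]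
    nlinarith
  have hdist := norm_sub_zero_le_of_norm_step_le (by positivity) hstep hT t ht
  linarith [norm_sub_norm_le (x 0) (x t), norm_sub_rev (x 0) (x t)]

theorem gradient_descent_norm_lower_bound (n : ℕ)
    (A : EuclideanSpace ℝ (Fin n) →L[ℝ] EuclideanSpace ℝ (Fin n))
    (b : EuclideanSpace ℝ (Fin n)) (hb : ‖b‖ = 1)
    (f : EuclideanSpace ℝ (Fin n) → ℝ)
    (hf : ∀ x, f x = (1/2) * ‖x‖^2 + (1/2) * ‖A x - b‖^2)
    (hA : ‖A‖ ≤ 1)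
    (η : ℝ) (hη : 0 ≤ η) (x₀ : EuclideanSpace ℝ (Fin n))
    (x : ℕ → EuclideanSpace ℝ (Fin n))
    (hx0 : x 0 = x₀)
    (hx : ∀ t, x (t + 1) = x t - η • (x t + (ContinuousLinearMap.adjoint A) (A (x t) - b)))
    (T : ℕ) (hT : ‖x₀‖ + 3 * η * T ≤ 1)
    (t : ℕ) (ht : t ≤ T) :
    ‖x t‖ ≥ ‖x₀‖ - 3 * η * t :=
  gradient_descent_norm_lower_bound_general n A b hb hA η hη x₀ x hx0 hx T hT t ht
end

section
/- Suppose ‖A‖ ≤ 1 (operator norm), ‖b‖ = 1, η ≥ 0, T : ℕ, ‖x₀‖ + 3·η·T ≤ 1, and 3·η·T ≤ ⟪b, x₀⟫. Then the success probability p := (1/16^T) · (∏ t in Finset.range (T+1), ⟪b, x t⟫)² · ‖x T‖² is bounded below: p ≥ (1/16^T) · ⟪b, x₀⟫² · (⟪b, x₀⟫ − 3·η·T)^(2T) · (‖x₀‖ − 3·η·T)². -/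
open scoped RealInnerProductSpace

theorem success_probability_lower_bound (n : ℕ)
    (A : EuclideanSpace ℝ (Fin n) →L[ℝ] EuclideanSpace ℝ (Fin n))
    (b : EuclideanSpace ℝ (Fin n)) (hb : ‖b‖ = 1)
    (f : EuclideanSpace ℝ (Fin n) → ℝ)
    (hf : ∀ x, f x = (1/2) * ‖x‖^2 + (1/2) * ‖A x - b‖^2)
    (hA : ‖A‖ ≤ 1)
    (η : ℝ) (hη : 0 ≤ η) (x₀ : EuclideanSpace ℝ (Fin n))
    (x : ℕ → EuclideanSpace ℝ (Fin n))
    (hx0 : x 0 = x₀)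
    (hx : ∀ t, x (t + 1) = x t - η • (x t + (ContinuousLinearMap.adjoint A) (A (x t) - b)))
    (T : ℕ) (hT : ‖x₀‖ + 3 * η * T ≤ 1)
    (hT' : 3 * η * T ≤ ⟪b, x₀⟫) :
    (1 / 16 ^ T) * (∏ t ∈ Finset.range (T + 1), ⟪b, x t⟫) ^ 2 * ‖x T‖ ^ 2 ≥
      (1 / 16 ^ T) * ⟪b, x₀⟫ ^ 2 * (⟪b, x₀⟫ - 3 * η * T) ^ (2 * T) *
        (‖x₀‖ - 3 * η * T) ^ 2 := by
  have hηT : 0 ≤ 3 * η * T := by positivity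
  -- step bound
  have hstep : ∀ t, ‖x t‖ ≤ 1 → ‖x (t + 1) - x t‖ ≤ 3 * η := by
    intro t ht
    rw [hx t]
    have he : x t - η • (x t + (ContinuousLinearMap.adjoint A) (A (x t) - b)) - x t
        = -(η • (x t + (ContinuousLinearMap.adjoint A) (A (x t) - b))) := by abel
    rw [he, norm_neg, norm_smul, Real.norm_of_nonneg hη]
    have hadj : ‖(ContinuousLinearMap.adjoint A : _)‖ = ‖A‖ :=
      LinearIsometryEquiv.norm_map ContinuousLinearMap.adjoint A
    have h1 : ‖(ContinuousLinearMap.adjoint A) (A (x t) - b)‖ ≤ 2 := by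
      calc ‖(ContinuousLinearMap.adjoint A) (A (x t) - b)‖
          ≤ ‖(ContinuousLinearMap.adjoint A : _)‖ * ‖A (x t) - b‖ :=
            ContinuousLinearMap.le_opNorm _ _
        _ ≤ 1 * (‖A (x t)‖ + ‖b‖) := by
            apply mul_le_mul (hadj ▸ hA) (norm_sub_le _ _) (norm_nonneg _) zero_le_one
        _ ≤ 1 * (1 + 1) := by
            have : ‖A (x t)‖ ≤ 1 := by
              calc ‖A (x t)‖ ≤ ‖A‖ * ‖x t‖ := ContinuousLinearMap.le_opNorm _ _
                _ ≤ 1 * 1 := mul_le_mul hA ht (norm_nonneg _) zero_le_one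
                _ = 1 := one_mul 1
            rw [hb]; linarith
        _ = 2 := by ring
    have h2 : ‖x t + (ContinuousLinearMap.adjoint A) (A (x t) - b)‖ ≤ 3 := by
      calc ‖x t + (ContinuousLinearMap.adjoint A) (A (x t) - b)‖
          ≤ ‖x t‖ + ‖(ContinuousLinearMap.adjoint A) (A (x t) - b)‖ := norm_add_le _ _
        _ ≤ 1 + 2 := add_le_add ht h1
        _ = 3 := by norm_num
    calc η * ‖x t + (ContinuousLinearMap.adjoint A) (A (x t) - b)‖
        ≤ η * 3 := mul_le_mul_of_nonneg_left h2 hη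
      _ = 3 * η := by ring
  -- distance from start
  have hdist : ∀ t, t ≤ T → ‖x t - x₀‖ ≤ 3 * η * t := by
    intro t
    induction t with
    | zero => intro _; simp [hx0]
    | succ t ih =>
      intro hle
      have htT : t ≤ T := Nat.le_of_succ_le hle
      have hd := ih htT
      have hxt1 : ‖x t‖ ≤ 1 := by
        have h1 : ‖x t‖ ≤ ‖x₀‖ + 3 * η * t := by
          calc ‖x t‖ = ‖x₀ + (x t - x₀)‖ := by rw [add_sub_cancel]
            _ ≤ ‖x₀‖ + ‖x t - x₀‖ := norm_add_le _ _
            _ ≤ ‖x₀‖ + 3 * η * t := by linarith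
        have h2 : 3 * η * (t : ℝ) ≤ 3 * η * T := by
          apply mul_le_mul_of_nonneg_left (Nat.cast_le.mpr htT) (by positivity)
        linarith
      have hs := hstep t hxt1
      calc ‖x (t + 1) - x₀‖ ≤ ‖x (t + 1) - x t‖ + ‖x t - x₀‖ := norm_sub_le_norm_sub_add_norm_sub _ _ _
        _ ≤ 3 * η + 3 * η * t := add_le_add hs hd
        _ = 3 * η * (t + 1 : ℕ) := by push_cast; ring
  -- inner product lower bound
  have hc0 : 0 ≤ ⟪b, x₀⟫ - 3 * η * T := by linarith
  have hinner : ∀ t, t ≤ T → ⟪b, x₀⟫ - 3 * η * T ≤ ⟪b, x t⟫ := by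
    intro t ht
    have h1 : |⟪b, x t - x₀⟫| ≤ ‖x t - x₀‖ := by
      have := abs_real_inner_le_norm b (x t - x₀)
      rwa [hb, one_mul] at this
    have h2 : 3 * η * (t : ℝ) ≤ 3 * η * T :=
      mul_le_mul_of_nonneg_left (Nat.cast_le.mpr ht) (by positivity)
    have h3 : ⟪b, x t⟫ = ⟪b, x₀⟫ + ⟪b, x t - x₀⟫ := by
      rw [inner_sub_right]; ring
    have h4 : -‖x t - x₀‖ ≤ ⟪b, x t - x₀⟫ := neg_le_of_abs_le h1
    have h5 := hdist t ht
    linarith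
  -- product bound
  set c := ⟪b, x₀⟫ - 3 * η * T with hcdef
  have hprod : ⟪b, x₀⟫ * c ^ T ≤ ∏ t ∈ Finset.range (T + 1), ⟪b, x t⟫ := by
    rw [Finset.prod_range_succ']
    have h1 : c ^ T ≤ ∏ t ∈ Finset.range T, ⟪b, x (t + 1)⟫ := by
      calc c ^ T = ∏ _t ∈ Finset.range T, c := by
            rw [Finset.prod_const, Finset.card_range]
        _ ≤ ∏ t ∈ Finset.range T, ⟪b, x (t + 1)⟫ :=
            Finset.prod_le_prod (fun i _ => hc0)
              (fun i hi => hinner (i + 1) (Finset.mem_range.mp hi))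
    have hb0 : 0 ≤ ⟪b, x₀⟫ := by linarith
    rw [hx0]
    calc ⟪b, x₀⟫ * c ^ T = c ^ T * ⟪b, x₀⟫ := by ring
      _ ≤ (∏ t ∈ Finset.range T, ⟪b, x (t + 1)⟫) * ⟪b, x₀⟫ :=
          mul_le_mul_of_nonneg_right h1 hb0
  -- norm lower bound
  have hnx0 : 3 * η * T ≤ ‖x₀‖ := by
    have := real_inner_le_norm b x₀
    rw [hb, one_mul] at this
    linarith
  have hxT : ‖x₀‖ - 3 * η * T ≤ ‖x T‖ := by
    have hd := hdist T le_rfl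
    have : ‖x₀‖ ≤ ‖x T‖ + ‖x T - x₀‖ := by
      calc ‖x₀‖ = ‖x T - (x T - x₀)‖ := by rw [sub_sub_cancel]
        _ ≤ ‖x T‖ + ‖x T - x₀‖ := norm_sub_le _ _
    linarith
  -- combine
  have hprodnn : 0 ≤ ⟪b, x₀⟫ * c ^ T := mul_nonneg (by linarith) (pow_nonneg hc0 T)
  have hsq1 : ⟪b, x₀⟫ ^ 2 * c ^ (2 * T) ≤ (∏ t ∈ Finset.range (T + 1), ⟪b, x t⟫) ^ 2 := by
    have := pow_le_pow_left₀ hprodnn hprod 2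
    calc ⟪b, x₀⟫ ^ 2 * c ^ (2 * T) = (⟪b, x₀⟫ * c ^ T) ^ 2 := by ring
      _ ≤ _ := this
  have hsq2 : (‖x₀‖ - 3 * η * T) ^ 2 ≤ ‖x T‖ ^ 2 :=
    pow_le_pow_left₀ (by linarith) hxT 2
  have h16 : (0:ℝ) ≤ 1 / 16 ^ T := by positivity
  rw [ge_iff_le]
  calc 1 / 16 ^ T * ⟪b, x₀⟫ ^ 2 * c ^ (2 * T) * (‖x₀‖ - 3 * η * T) ^ 2
      = 1 / 16 ^ T * (⟪b, x₀⟫ ^ 2 * c ^ (2 * T)) * (‖x₀‖ - 3 * η * T) ^ 2 := by ring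
    _ ≤ 1 / 16 ^ T * (∏ t ∈ Finset.range (T + 1), ⟪b, x t⟫) ^ 2 * ‖x T‖ ^ 2 := by
        apply mul_le_mul (mul_le_mul_of_nonneg_left hsq1 h16) hsq2 (by positivity) (by positivity)
end
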